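/- Let a, b ∈ H with a ≠ b^c and a, b lying on the same sphere (i.e. Re(a) = Re(b), |Im(a)| = |Im(b)|), both non-real. Then the only quaternionic zero of p(x) = x² - x(a+b) + ab is x = a; in particular x = b is not a zero unless b = a. -/

import Mathlib

/-!
The polynomial factors as `x (x - a) - (x - a) b`, so a zero `x ≠ a` is the conjugate
`(x - a) b (x - a)⁻¹` of `b` and therefore lies on the sphere of `b`, which is that of `a`.
On a common sphere `x² = 2 Re(a) x - |a|²` and `a² = 2 Re(a) a - |a|²`, which turns the
polynomial into `(x - a)(a^c - b)`; since `a^c ≠ b`, the zero is `x = a` after all.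
-/

open Quaternion

theorem eq_mul_mul_inv_of_sq_sub_mul_add_mul_eq_zero {D : Type*} [DivisionRing D] {a b x : D}
    (hx : x ^ 2 - x * (a + b) + a * b = 0) (hxa : x ≠ a) :
    x = (x - a) * b * (x - a)⁻¹ := by
  have hfac : x * (x - a) - (x - a) * b = x ^ 2 - x * (a + b) + a * b := by noncomm_ring
  rw [hx, sub_eq_zero] at hfac
  rw [eq_mul_inv_iff_mul_eq₀ (sub_ne_zero.mpr hxa), hfac]

namespace Quaternion

variable {R : Type*}

section CommRing

variable [CommRing R]

theorem re_mul_comm (p q : ℍ[R]) : (p * q).re = (q * p).re := by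
  simp only [re_mul]; ring

theorem normSq_eq_re_sq_add_normSq_im (a : ℍ[R]) : normSq a = a.re ^ 2 + normSq a.im := by
  simp only [normSq_def', re_im, imI_im, imJ_im, imK_im]; ring

theorem sq_sub_mul_add_mul_eq_of_re_eq_of_normSq_eq {x a : ℍ[R]} (b : ℍ[R])
    (hre : x.re = a.re) (hn : normSq x = normSq a) :
    x ^ 2 - x * (a + b) + a * b = (x - a) * (star a - b) := by
  have hsum : x + star x = a + star a := by rw [self_add_star', self_add_star', hre]
  have hprod : x * star x = a * star a := by rw [self_mul_star, self_mul_star, hn]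
  have hdiff : (x - a) * (star a - b) - (x ^ 2 - x * (a + b) + a * b) =
      x * (a + star a - (x + star x)) + (x * star x - a * star a) := by
    noncomm_ring
  rw [hsum, hprod, sub_self, sub_self, mul_zero, add_zero, sub_eq_zero] at hdiff
  exact hdiff.symm

end CommRing

section LinearOrderedField

variable [Field R] [LinearOrder R] [IsStrictOrderedRing R]

theorem re_mul_mul_inv {u : ℍ[R]} (hu : u ≠ 0) (b : ℍ[R]) : (u * b * u⁻¹).re = b.re := by
  rw [mul_assoc, re_mul_comm, mul_assoc, inv_mul_cancel₀ hu, mul_one]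

theorem normSq_mul_mul_inv {u : ℍ[R]} (hu : u ≠ 0) (b : ℍ[R]) :
    normSq (u * b * u⁻¹) = normSq b := by
  rw [map_mul, map_mul, map_inv₀, mul_comm, inv_mul_cancel_left₀ (normSq_ne_zero.mpr hu)]

theorem eq_of_sq_sub_mul_add_mul_eq_zero {a b x : ℍ[R]} (hre : a.re = b.re)
    (hn : normSq a = normSq b) (hne : a ≠ star b) (hx : x ^ 2 - x * (a + b) + a * b = 0) :
    x = a := by
  by_contra hxa
  have hconj := eq_mul_mul_inv_of_sq_sub_mul_add_mul_eq_zero hx hxa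
  have hxre : x.re = a.re := by rw [hconj, re_mul_mul_inv (sub_ne_zero.mpr hxa), hre]
  have hxn : normSq x = normSq a := by
    rw [hconj, normSq_mul_mul_inv (sub_ne_zero.mpr hxa), hn]
  rw [sq_sub_mul_add_mul_eq_of_re_eq_of_normSq_eq b hxre hxn] at hx
  rcases mul_eq_zero.mp hx with h | h
  · exact hxa (sub_eq_zero.mp h)
  · exact hne (by rw [← sub_eq_zero.mp h, star_star])

end LinearOrderedField

end Quaternion

theorem zero_set_same_sphere_general (a b : Quaternion ℝ)
    (hne : a ≠ star b)
    (hre : a.re = b.re) (him : ‖a.im‖ = ‖b.im‖) :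
    (∀ x : Quaternion ℝ, x ^ 2 - x * (a + b) + a * b = 0 ↔ x = a) ∧
    (b ^ 2 - b * (a + b) + a * b = 0 → b = a) := by
  have hn : normSq a = normSq b := by
    rw [normSq_eq_re_sq_add_normSq_im a, normSq_eq_re_sq_add_normSq_im b,
      normSq_eq_norm_mul_self a.im, normSq_eq_norm_mul_self b.im, hre, him]
  have hzero (x : Quaternion ℝ) : x ^ 2 - x * (a + b) + a * b = 0 ↔ x = a :=
    ⟨eq_of_sq_sub_mul_add_mul_eq_zero hre hn hne, by rintro rfl; noncomm_ring⟩
  exact ⟨hzero, (hzero b).mp⟩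

/-- If `a ≠ b^c` lie on the same sphere, the only quaternionic zero of
`x² - x(a+b) + ab` is `x = a`; in particular `b` is a zero only if `b = a`. -/
theorem zero_set_same_sphere (a b : Quaternion ℝ)
    (ha : a.im ≠ 0) (hb : b.im ≠ 0) (hne : a ≠ star b)
    (hre : a.re = b.re) (him : ‖a.im‖ = ‖b.im‖) :
    (∀ x : Quaternion ℝ, x ^ 2 - x * (a + b) + a * b = 0 ↔ x = a) ∧
    (b ^ 2 - b * (a + b) + a * b = 0 → b = a) :=
  zero_set_same_sphere_general a b hne hre him
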